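/- arXiv:1201.4725 — 2 statements merged into one kernel-verified Lean document; each statement's English description precedes it below -/
import Mathlib

section
/- Let (ε_n)_{n∈ℕ} be a sequence of reals with ε_n ∈ (0, 1/2] for all n and ε_n ≥ n^{−C} for some constant C > 0 and all sufficiently large n (i.e. ε_n = 1/poly(n)). Define N'_n = 2^{n/log₂ n} · 4/(2ε_n)^4 and T'_n = log₂ N'_n / (3·log₂ N'_n + 4 + 4·log₂ ε_n). Then, as n → ∞: (i) log₂ N'_n = o(n); (ii) (n + 2)·T'_n = n/3 + o(n); and consequently (iii) (n + 2)·T'_n + log₂ N'_n + log₂((n + 2)·T'_n + log₂ N'_n) = n/3 + o(n), i.e. the difference between this quantity and n/3, divided by n, tends to 0. -/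
/-!
Put `ℓ = log₂ ε`, so that `-C log₂ n ≤ ℓ ≤ -1` eventually. Then `log₂ N' = n / log₂ n - 2 - 4ℓ`
is `o(n)`. The denominator `D = 3 log₂ N' + 4 + 4ℓ` of `T'` is at least `3n / log₂ n`, so
`(n + 2) T' - n / 3 = 2/3 + 4 (n + 2) (-1 - ℓ) / (3D) = O(log² n)`. Finally, the logarithm
of a quantity `n/3 + o(n)` is `log₂ n + O(1) = o(n)`.
-/

open Filter Asymptotics Real Topology

lemma logb_two_le_neg_one_of_le_half {x : ℝ} (hx₀ : 0 < x) (hx : x ≤ 1 / 2) :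
    logb 2 x ≤ -1 := by
  have : logb 2 x ≤ logb 2 (1 / 2) := logb_le_logb_of_le (b := 2) (by norm_num) hx₀ hx
  rwa [one_div, logb_inv, logb_self_eq_one one_lt_two] at this

lemma neg_logb_le_mul_logb_of_rpow_neg_le {b x y C : ℝ} (hb : 1 < b) (hy : 0 < y)
    (hxy : y ^ (-C) ≤ x) : -logb b x ≤ C * logb b y := by
  have := logb_le_logb_of_le hb (rpow_pos_of_pos hy _) hxy
  rw [logb_rpow_eq_mul_logb_of_pos hy] at this
  linarith

lemma logb_two_rpow_mul_four_div (t : ℝ) {x : ℝ} (hx : x ≠ 0) :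
    logb 2 (2 ^ t * 4 / (2 * x) ^ 4) = t - 2 - 4 * logb 2 x := by
  have h4 : logb 2 4 = 2 := by
    rw [show (4 : ℝ) = 2 ^ (2 : ℕ) by norm_num, logb_pow, logb_self_eq_one one_lt_two]
    norm_num
  rw [logb_div (by positivity) (by simp [hx]), logb_mul (by positivity) (by norm_num),
    logb_rpow two_pos (by norm_num), logb_pow, logb_mul two_ne_zero hx, h4,
    logb_self_eq_one one_lt_two]
  push_cast
  ring

lemma add_two_mul_div_sub_div_three (m L ℓ : ℝ) (hD : 3 * L + 4 + 4 * ℓ ≠ 0) :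
    (m + 2) * (L / (3 * L + 4 + 4 * ℓ)) - m / 3 =
      2 / 3 + 4 * (m + 2) * (-1 - ℓ) / (3 * (3 * L + 4 + 4 * ℓ)) := by
  generalize hL : 3 * L + 4 + 4 * ℓ = D at *
  obtain rfl : L = (D - 4 - 4 * ℓ) / 3 := by linarith
  field_simp
  ring

lemma abs_add_two_mul_div_sub_div_three_le {m P ℓ C : ℝ} (hm : 1 ≤ m) (hP : 0 < P)
    (hℓ : ℓ ≤ -1) (hℓC : -ℓ ≤ C * P) :
    |(m + 2) * ((m / P - 2 - 4 * ℓ) / (3 * (m / P - 2 - 4 * ℓ) + 4 + 4 * ℓ)) - m / 3| ≤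
      2 / 3 + 4 / 3 * C * P ^ 2 := by
  set D := 3 * (m / P - 2 - 4 * ℓ) + 4 + 4 * ℓ
  have hmP : 0 < m / P := div_pos (by linarith) hP
  have hD : 3 * (m / P) ≤ D := by simp only [D]; linarith
  have hrem : 4 * (m + 2) * (-1 - ℓ) / (3 * D) ≤ 4 / 3 * C * P ^ 2 := by
    rw [div_le_iff₀ (by linarith)]
    calc 4 * (m + 2) * (-1 - ℓ) ≤ 4 * (3 * m) * (C * P) := by nlinarith
      _ = 4 / 3 * C * P ^ 2 * (3 * (3 * (m / P))) := by field_simp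
      _ ≤ 4 / 3 * C * P ^ 2 * (3 * D) := by
        have hC : 0 < C := pos_of_mul_pos_left (by linarith) hP.le
        gcongr
  have hrem₀ : 0 ≤ 4 * (m + 2) * (-1 - ℓ) / (3 * D) :=
    div_nonneg (mul_nonneg (by linarith) (by linarith)) (by linarith)
  rw [add_two_mul_div_sub_div_three m _ ℓ (by linarith), abs_le]
  constructor <;> linarith

lemma isLittleO_const_natCast (c : ℝ) :
    (fun _ : ℕ => c) =o[atTop] (fun n : ℕ => (n : ℝ)) :=
  isLittleO_const_left.2 <| .inr <| tendsto_norm_atTop_atTop.comp tendsto_natCast_atTop_atTop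

lemma isLittleO_natCast_div_logb_natCast {b : ℝ} (hb : 1 < b) :
    (fun n : ℕ => (n : ℝ) / logb b n) =o[atTop] (fun n : ℕ => (n : ℝ)) := by
  have hinv : Tendsto (fun n : ℕ => (logb b n)⁻¹) atTop (𝓝 0) :=
    tendsto_inv_atTop_zero.comp ((tendsto_logb_atTop hb).comp tendsto_natCast_atTop_atTop)
  refine ((isLittleO_one_iff ℝ).2 hinv).mul_isBigO (isBigO_refl _ _) |>.congr
    (fun n => ?_) (fun n => one_mul _)
  simp only [div_eq_inv_mul]

lemma isBigO_logb_of_rpow_neg_le {b C : ℝ} (hb : 1 < b) {x : ℕ → ℝ}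
    (hx : ∀ᶠ n in atTop, x n ≤ 1) (hxC : ∀ᶠ n : ℕ in atTop, (n : ℝ) ^ (-C) ≤ x n) :
    (fun n => logb b (x n)) =O[atTop] (fun n : ℕ => logb b n) := by
  refine .of_bound C ?_
  filter_upwards [hx, hxC, eventually_ge_atTop 1] with n hx₁ hxn hn
  have hn₀ : (0 : ℝ) < n := by exact_mod_cast hn
  have hx₀ : 0 < x n := (rpow_pos_of_pos hn₀ _).trans_le hxn
  rw [norm_of_nonpos (logb_nonpos hb hx₀.le hx₁),
    norm_of_nonneg (logb_nonneg hb (by exact_mod_cast hn))]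
  exact neg_logb_le_mul_logb_of_rpow_neg_le hb hn₀ hxn

lemma isLittleO_logb_of_isLittleO_sub_const_mul (b : ℝ) {f : ℕ → ℝ} {c : ℝ} (hc : c ≠ 0)
    (hf : (fun n : ℕ => f n - c * n) =o[atTop] (fun n : ℕ => (n : ℝ))) :
    (fun n : ℕ => logb b (f n)) =o[atTop] (fun n : ℕ => (n : ℝ)) := by
  have hratio : Tendsto (fun n : ℕ => f n / n) atTop (𝓝 c) := by
    have := hf.tendsto_div_nhds_zero.add_const c
    rw [zero_add] at this
    refine this.congr' ?_
    filter_upwards [eventually_ne_atTop 0] with n hn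
    field_simp
    ring
  have hlog_ratio : (fun n : ℕ => log (f n / n)) =o[atTop] (fun n : ℕ => (n : ℝ)) :=
    ((continuousAt_log hc).tendsto.comp hratio).isBigO_one ℝ |>.trans_isLittleO <|
      isLittleO_const_natCast 1
  have hlog_n : (fun n : ℕ => log n) =o[atTop] (fun n : ℕ => (n : ℝ)) :=
    isLittleO_log_id_atTop.comp_tendsto tendsto_natCast_atTop_atTop
  refine ((hlog_n.add hlog_ratio).const_mul_left (log b)⁻¹).congr' ?_ EventuallyEq.rfl
  filter_upwards [eventually_ne_atTop 0, hratio.eventually_ne hc] with n hn hfn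
  rw [logb, log_div (div_ne_zero_iff.1 hfn).1 (Nat.cast_ne_zero.2 hn), add_sub_cancel,
    div_eq_inv_mul]

/-- If the bias sequence satisfies `ε n ∈ (0, 1/2]` and `ε n ≥ n^(-C)` for large `n`
(i.e. `ε = 1/poly(n)`), and `N' n = 2^(n/log₂ n) · 4/(2 ε n)^4`,
`T' n = log₂ N' n / (3 log₂ N' n + 4 + 4 log₂ ε n)`, then `log₂ N' n = o(n)`,
`(n+2) T' n = n/3 + o(n)` and the full exponent
`(n+2) T' n + log₂ N' n + log₂((n+2) T' n + log₂ N' n)` equals `n/3 + o(n)`. -/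
theorem lpn_cube_root_exponent (ε : ℕ → ℝ) (hε : ∀ n, ε n ∈ Set.Ioc (0 : ℝ) (1 / 2))
    (hpoly : ∃ C : ℝ, 0 < C ∧ ∀ᶠ n : ℕ in atTop, (n : ℝ) ^ (-C) ≤ ε n)
    (N' T' : ℕ → ℝ)
    (hN' : ∀ n, N' n = 2 ^ ((n : ℝ) / Real.logb 2 n) * 4 / (2 * ε n) ^ 4)
    (hT' : ∀ n, T' n =
      Real.logb 2 (N' n) / (3 * Real.logb 2 (N' n) + 4 + 4 * Real.logb 2 (ε n))) :
    (fun n : ℕ => Real.logb 2 (N' n)) =o[atTop] (fun n : ℕ => (n : ℝ)) ∧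
      (fun n : ℕ => ((n : ℝ) + 2) * T' n - n / 3) =o[atTop] (fun n : ℕ => (n : ℝ)) ∧
      Tendsto (fun n : ℕ =>
          (((n : ℝ) + 2) * T' n + Real.logb 2 (N' n) +
              Real.logb 2 (((n : ℝ) + 2) * T' n + Real.logb 2 (N' n)) - n / 3) / n)
        atTop (nhds 0) := by
  obtain ⟨C, hC, hεC⟩ := hpoly
  have hℓ (n : ℕ) : logb 2 (ε n) ≤ -1 := logb_two_le_neg_one_of_le_half (hε n).1 (hε n).2
  have hlogN (n : ℕ) : logb 2 (N' n) = n / logb 2 n - 2 - 4 * logb 2 (ε n) := by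
    rw [hN', logb_two_rpow_mul_four_div _ (hε n).1.ne']
  have hN'_o : (fun n : ℕ => logb 2 (N' n)) =o[atTop] (fun n : ℕ => (n : ℝ)) := by
    have hℓ_o := (isBigO_logb_of_rpow_neg_le one_lt_two
      (.of_forall fun n => by linarith [(hε n).2]) hεC).trans_isLittleO
      (isLittleO_logb_id_atTop.comp_tendsto tendsto_natCast_atTop_atTop)
    exact (((isLittleO_natCast_div_logb_natCast one_lt_two).sub (isLittleO_const_natCast 2)).sub
      (hℓ_o.const_mul_left 4)).congr_left fun n => (hlogN n).symm
  have hT'_o :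
      (fun n : ℕ => ((n : ℝ) + 2) * T' n - n / 3) =o[atTop] (fun n : ℕ => (n : ℝ)) := by
    refine IsBigO.trans_isLittleO (g := fun n : ℕ => 2 / 3 + 4 / 3 * C * logb 2 n ^ 2)
      (.of_bound' ?_) ((isLittleO_const_natCast _).add <|
        (isLittleO_pow_logb_id_atTop.comp_tendsto tendsto_natCast_atTop_atTop).const_mul_left _)
    filter_upwards [hεC, eventually_ge_atTop 2] with n hεn hn
    have hn₀ : (0 : ℝ) < n := by positivity
    rw [hT', hlogN, norm_eq_abs, norm_of_nonneg (by positivity)]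
    exact abs_add_two_mul_div_sub_div_three_le (by exact_mod_cast (by omega : 1 ≤ n))
      (logb_pos one_lt_two (by exact_mod_cast hn)) (hℓ n)
      (neg_logb_le_mul_logb_of_rpow_neg_le one_lt_two hn₀ hεn)
  refine ⟨hN'_o, hT'_o, ?_⟩
  have hQ : (fun n : ℕ => (((n : ℝ) + 2) * T' n + logb 2 (N' n)) - 1 / 3 * n) =o[atTop]
      (fun n : ℕ => (n : ℝ)) :=
    (hT'_o.add hN'_o).congr_left fun n => by ring
  exact ((hQ.add (isLittleO_logb_of_isLittleO_sub_const_mul 2 (by norm_num) hQ)).congr_left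
    fun n => by ring).tendsto_div_nhds_zero
end

section
/- Let n be a natural number and l a real number with 0 ≤ l and ⌊l⌋ ≤ n − 3. Set l' = ⌊l⌋. Then n / log₂ n + l − l' ≥ (n − l') / log₂(n − l'). -/
open Real

/-- `x / logb b x = log b * (log x / x)⁻¹`, and `log x / x` decreases beyond `e`. -/
theorem div_logb_monotoneOn {b : ℝ} (hb : 1 < b) :
    MonotoneOn (fun x => x / logb b x) {x | exp 1 ≤ x} := by
  intro x hx y hy hxy
  have hy_pos : 0 < log y / y :=
    div_pos (log_pos (lt_of_lt_of_le (one_lt_exp_iff.2 one_pos) hy))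
      (lt_of_lt_of_le (exp_pos 1) hy)
  have hinv : (log x / x)⁻¹ ≤ (log y / y)⁻¹ :=
    inv_anti₀ hy_pos (log_div_self_antitoneOn hx hy hxy)
  have hrw : ∀ z, z / logb b z = log b * (log z / z)⁻¹ := fun z => by
    rw [logb, inv_div, div_div_eq_mul_div, mul_comm, mul_div_assoc]
  simp only [hrw]
  exact mul_le_mul_of_nonneg_left hinv (log_pos hb).le

/-- The decimation inequality: if `0 ≤ l` and `l' = ⌊l⌋ ≤ n - 3`, then
`n/log₂ n + l - l' ≥ (n - l')/log₂(n - l')`. -/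
theorem decimation_inequality (n : ℕ) (l : ℝ) (hl : 0 ≤ l) (hfloor : ⌊l⌋ ≤ (n : ℤ) - 3) :
    (n : ℝ) / Real.logb 2 n + l - (⌊l⌋ : ℝ) ≥
      ((n : ℝ) - (⌊l⌋ : ℝ)) / Real.logb 2 ((n : ℝ) - (⌊l⌋ : ℝ)) := by
  have hfloor_nonneg : (0 : ℝ) ≤ ⌊l⌋ := by exact_mod_cast Int.floor_nonneg.2 hl
  have hfloor_le : (⌊l⌋ : ℝ) ≤ n - 3 := by exact_mod_cast hfloor
  have he : exp 1 ≤ (n : ℝ) - ⌊l⌋ := by linarith [exp_one_lt_d9]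
  have hn : exp 1 ≤ (n : ℝ) := he.trans (by linarith)
  have hmono := div_logb_monotoneOn one_lt_two he hn (by linarith : (n : ℝ) - ⌊l⌋ ≤ n)
  linarith [Int.floor_le l]
end
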